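/- arXiv:2110.07226 — 2 statements merged into one kernel-verified Lean document; each statement's English description precedes it below -/
import Mathlib

section
/- With μ_A(η, w_A, w_B) = [w_A − (1−η)(w_A + w_B − 2 w_A w_B)] / [η w_A + (1−η) w_B] · θ* and θ* > 0, η ∈ (0,1), w_A, w_B ∈ (0,1), the partial derivative of μ_A with respect to η equals 2(1−w_A) w_A w_B θ* / (η w_A + (1−η) w_B)², and in particular is strictly positive. -/
/-! Both numerator and denominator of `μ_A` are affine in `η`, so `∂μ_A/∂η` is the determinant
`b c - a d` of the Möbius map `η ↦ (a + b η)/(c + d η)` over the squared denominator; here that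
determinant collapses to `2 (1 - w_A) w_A w_B`. -/

theorem hasDerivAt_affine_div_affine {𝕜 : Type*} [NontriviallyNormedField 𝕜] (a b c d x : 𝕜)
    (hx : c + d * x ≠ 0) :
    HasDerivAt (fun y => (a + b * y) / (c + d * y)) ((b * c - a * d) / (c + d * x) ^ 2) x := by
  have hnum : HasDerivAt (fun y => a + b * y) b x := by
    simpa using ((hasDerivAt_id x).const_mul b).const_add a
  have hden : HasDerivAt (fun y => c + d * y) d x := by
    simpa using ((hasDerivAt_id x).const_mul d).const_add c
  exact (hnum.div hden hx).congr_deriv (by ring)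

/-- The long-run opinion of group A is increasing in its population share:
`∂μ_A/∂η = 2(1-wA) wA wB θ* / (η wA + (1-η) wB)² > 0`. -/
theorem dmuA_deta
    (η wA wB θ : ℝ) (hθ : 0 < θ) (hη : η ∈ Set.Ioo (0 : ℝ) 1)
    (hwA : wA ∈ Set.Ioo (0 : ℝ) 1) (hwB : wB ∈ Set.Ioo (0 : ℝ) 1) :
    HasDerivAt (fun x : ℝ =>
        (wA - (1 - x) * (wA + wB - 2 * wA * wB)) / (x * wA + (1 - x) * wB) * θ)
      (2 * (1 - wA) * wA * wB * θ / (η * wA + (1 - η) * wB) ^ 2) η ∧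
    0 < 2 * (1 - wA) * wA * wB * θ / (η * wA + (1 - η) * wB) ^ 2 := by
  obtain ⟨hη0, hη1⟩ := hη
  obtain ⟨hwA0, hwA1⟩ := hwA
  obtain ⟨hwB0, -⟩ := hwB
  have hden : 0 < η * wA + (1 - η) * wB := by
    have : 0 < 1 - η := sub_pos.mpr hη1
    positivity
  have hden_affine (x : ℝ) : x * wA + (1 - x) * wB = wB + (wA - wB) * x := by ring
  have hdet : (wA + wB - 2 * wA * wB) * wB - (wA - (wA + wB - 2 * wA * wB)) * (wA - wB)
      = 2 * (1 - wA) * wA * wB := by ring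
  have hmobius := (hasDerivAt_affine_div_affine (wA - (wA + wB - 2 * wA * wB))
    (wA + wB - 2 * wA * wB) wB (wA - wB) η (by rw [← hden_affine]; exact hden.ne')).mul_const θ
  refine ⟨?_, ?_⟩
  · have hμ : (fun x : ℝ =>
        (wA - (1 - x) * (wA + wB - 2 * wA * wB)) / (x * wA + (1 - x) * wB) * θ)
        = fun y => (wA - (wA + wB - 2 * wA * wB) + (wA + wB - 2 * wA * wB) * y)
          / (wB + (wA - wB) * y) * θ := by
      funext x
      rw [hden_affine]
      ring
    rw [hμ]
    exact hmobius.congr_deriv (by rw [hden_affine, ← hdet]; ring)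
  · have : 0 < 1 - wA := sub_pos.mpr hwA1
    positivity
end

section
/- With μ_A(η, w_A, w_B) = [w_A − (1−η)(w_A + w_B − 2 w_A w_B)] / [η w_A + (1−η) w_B] · θ*, θ* > 0, η ∈ (0,1), w_A, w_B ∈ (0,1), we have ∂μ_A/∂w_A = 2 w_B (w_B(1−η) + η)(1−η) θ* / (η w_A + (1−η) w_B)² > 0. -/
/-!
As a function of `w_A`, `μ_A / θ*` is the linear-fractional map `(a w_A + b) / (c w_A + d)` with
`a = 1 - (1-η)(1-2w_B)`, `b = -(1-η) w_B`, `c = η`, `d = (1-η) w_B`, whose derivative is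
`(ad - bc) / (c w_A + d)²`; here `ad - bc = 2 w_B (1-η) (w_B(1-η) + η)`, positive for `η, w_B ∈ (0,1)`.
-/

theorem hasDerivAt_linear_div_linear {𝕜 : Type*} [NontriviallyNormedField 𝕜] {a b c d x : 𝕜}
    (hx : c * x + d ≠ 0) :
    HasDerivAt (fun y => (a * y + b) / (c * y + d)) ((a * d - b * c) / (c * x + d) ^ 2) x := by
  have hnum : HasDerivAt (fun y => a * y + b) a x := by
    simpa using ((hasDerivAt_id x).const_mul a).add_const b
  have hden : HasDerivAt (fun y => c * y + d) c x := by
    simpa using ((hasDerivAt_id x).const_mul c).add_const d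
  refine (hnum.div hden hx).congr_deriv ?_
  ring

/-- The long-run opinion of group A is increasing in the weight it gives to the signal:
`∂μ_A/∂w_A = 2 w_B (w_B(1-η) + η)(1-η) θ* / (η w_A + (1-η) w_B)² > 0`. -/
theorem dmuA_dwA
    (η wA wB θ : ℝ) (hθ : 0 < θ) (hη : η ∈ Set.Ioo (0 : ℝ) 1)
    (hwA : wA ∈ Set.Ioo (0 : ℝ) 1) (hwB : wB ∈ Set.Ioo (0 : ℝ) 1) :
    HasDerivAt (fun x : ℝ =>
        (x - (1 - η) * (x + wB - 2 * x * wB)) / (η * x + (1 - η) * wB) * θ)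
      (2 * wB * (wB * (1 - η) + η) * (1 - η) * θ / (η * wA + (1 - η) * wB) ^ 2) wA ∧
    0 < 2 * wB * (wB * (1 - η) + η) * (1 - η) * θ / (η * wA + (1 - η) * wB) ^ 2 := by
  obtain ⟨hη0, hη1⟩ := hη
  have h1η : 0 < 1 - η := by linarith
  have hD : 0 < η * wA + (1 - η) * wB := by nlinarith [hwA.1, hwB.1]
  have hμ := (hasDerivAt_linear_div_linear (a := 1 - (1 - η) * (1 - 2 * wB))
    (b := -((1 - η) * wB)) hD.ne').mul_const θ
  constructor
  · exact (hμ.congr_deriv (by ring)).congr_of_eventuallyEq (.of_forall fun x => by ring)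
  · have hB0 := hwB.1
    positivity
end
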